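/- Let k ≥ 2, ε = 3^{-k}, n = 3^{k−1}, and let A_l ⊆ [0,1) (l = 0,…,n−1) denote the union of tail intervals in [0,1) ∩ (supp w_{n−l} \ supp w_{n−(l+1)}) for the periodized weight w built from the recursive construction. Then |A_l| = ((1/2)(1 − 3^{−(k−1)}))^l · 3^{−k}. -/
import Mathlib


open MeasureTheory

/-- `Carry k l` is the set of (left endpoint, length) pairs of the intervals of `[0,1)`
carrying `w_{n−l}` in the recursive construction: `[0,1)` carries `w_n`, and if
`I = [a, a+h)` carries `w_ν` (`ν ≥ 1`) then its subintervals `I_m^{(2)}`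
(`m = 0,…,k−2`), of left endpoint `a+h−(2/3)3^{-m}h` and length `(1/3)3^{-m}h`,
carry `w_{ν−1}`. -/
def Carry (k : ℕ) : ℕ → Set (ℝ × ℝ)
  | 0 => {((0:ℝ), (1:ℝ))}
  | (l+1) => {q | ∃ r ∈ Carry k l, ∃ m : ℕ, m < k - 1 ∧
      q = (r.1 + r.2 - (2/3)*(3:ℝ)^(-(m:ℤ))*r.2, (1/3)*(3:ℝ)^(-(m:ℤ))*r.2)}

/-- `A_l`: the union of the tail intervals `J_{k−1}^{(3)}` (the right subinterval of
length `3^{-k}|J|`) over all intervals `J ⊆ [0,1)` carrying `w_{n−l}`. -/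
noncomputable def TailSet (k l : ℕ) : Set ℝ :=
  ⋃ r ∈ Carry k l, Set.Ico (r.1 + r.2 - (3:ℝ)^(-(k:ℤ))*r.2) (r.1 + r.2)

/-- The child interval map. -/
noncomputable def chld (r : ℝ × ℝ) (m : ℕ) : ℝ × ℝ :=
  (r.1 + r.2 - (2/3)*(3:ℝ)^(-(m:ℤ))*r.2, (1/3)*(3:ℝ)^(-(m:ℤ))*r.2)

/-- Finset version of `Carry`. -/
noncomputable def CarryF (k : ℕ) : ℕ → Finset (ℝ × ℝ)
  | 0 => {((0:ℝ), (1:ℝ))}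
  | (l+1) => ((CarryF k l) ×ˢ (Finset.range (k-1))).image (fun p => chld p.1 p.2)

lemma coe_CarryF (k l : ℕ) : (CarryF k l : Set (ℝ × ℝ)) = Carry k l := by
  induction l with
  | zero => simp [CarryF, Carry]
  | succ l ih =>
    ext q
    simp only [CarryF, Carry, Finset.coe_image, Set.mem_image, Finset.mem_coe,
      Finset.mem_product, Finset.mem_range, Set.mem_setOf_eq, ← ih, chld]
    constructor
    · rintro ⟨⟨r, m⟩, ⟨hr, hm⟩, rfl⟩
      exact ⟨r, hr, m, hm, rfl⟩
    · rintro ⟨r, hr, m, hm, rfl⟩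
      exact ⟨⟨r, m⟩, ⟨hr, hm⟩, rfl⟩

/-- The interval of a pair. -/
def ivl (r : ℝ × ℝ) : Set ℝ := Set.Ico r.1 (r.1 + r.2)

lemma zpow3_pos (m : ℕ) : (0:ℝ) < (3:ℝ)^(-(m:ℤ)) := by positivity

lemma zpow3_le_one (m : ℕ) : (3:ℝ)^(-(m:ℤ)) ≤ 1 :=
  zpow_le_one_of_nonpos₀ (by norm_num) (by omega)

lemma chld_len_pos {r : ℝ × ℝ} (hr : 0 < r.2) (m : ℕ) : 0 < (chld r m).2 := by
  have := zpow3_pos m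
  simp only [chld]
  positivity

lemma chld_subset {r : ℝ × ℝ} (hr : 0 < r.2) (m : ℕ) : ivl (chld r m) ⊆ ivl r := by
  have h0 := zpow3_pos m
  have h1 := zpow3_le_one m
  apply Set.Ico_subset_Ico
  · simp only [chld]
    nlinarith
  · simp only [chld]
    nlinarith

lemma chld_disjoint {r : ℝ × ℝ} (hr : 0 < r.2) {m m' : ℕ} (h : m < m') :
    Disjoint (ivl (chld r m)) (ivl (chld r m')) := by
  have h0 := zpow3_pos m
  have key : (3:ℝ)^(-(m':ℤ)) ≤ (1/3) * (3:ℝ)^(-(m:ℤ)) := by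
    have : (3:ℝ)^(-(m':ℤ)) ≤ (3:ℝ)^(-(m:ℤ)-1) :=
      zpow_le_zpow_right₀ (by norm_num) (by omega)
    rw [zpow_sub₀ (by norm_num : (3:ℝ) ≠ 0)] at this
    linarith
  rw [ivl, ivl, Set.Ico_disjoint_Ico]
  refine le_trans (min_le_left _ _) (le_trans ?_ (le_max_right _ _))
  simp only [chld]
  nlinarith

lemma chld_inj_len {r : ℝ × ℝ} (hr : 0 < r.2) {m m' : ℕ}
    (h : (chld r m).2 = (chld r m').2) : m = m' := by
  by_contra hne
  rcases Nat.lt_or_ge m m' with hlt | hge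
  · have := zpow_lt_zpow_right₀ (a := (3:ℝ)) (by norm_num) (show -(m':ℤ) < -(m:ℤ) by omega)
    simp only [chld] at h
    nlinarith
  · have hlt : m' < m := by omega
    have := zpow_lt_zpow_right₀ (a := (3:ℝ)) (by norm_num) (show -(m:ℤ) < -(m':ℤ) by omega)
    simp only [chld] at h
    nlinarith

/-- The constant σ. -/
noncomputable def sig (k : ℕ) : ℝ := (1/2) * (1 - (3:ℝ)^(1-(k:ℤ)))

lemma sum_sig (k : ℕ) (hk : 1 ≤ k) :
    ∑ m ∈ Finset.range (k-1), (1/3) * (3:ℝ)^(-(m:ℤ)) = sig k := by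
  have h1 : ∀ m : ℕ, (3:ℝ)^(-(m:ℤ)) = (1/3:ℝ)^m := by
    intro m
    rw [zpow_neg, zpow_natCast, one_div, inv_pow]
  simp only [h1]
  rw [← Finset.mul_sum, geom_sum_eq (by norm_num : (1/3:ℝ) ≠ 1)]
  have h2 : (3:ℝ)^(1-(k:ℤ)) = (1/3:ℝ)^(k-1) := by
    have he : (1:ℤ) - (k:ℤ) = -((k-1:ℕ):ℤ) := by
      push_cast [Nat.cast_sub hk]; ring
    rw [he, h1]
  rw [sig, h2]
  ring

lemma carry_prop (k : ℕ) (hk : 1 ≤ k) (l : ℕ) :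
    (∀ r ∈ CarryF k l, 0 < r.2) ∧
    ((CarryF k l : Set (ℝ × ℝ)).PairwiseDisjoint ivl) ∧
    (∑ r ∈ CarryF k l, r.2 = (sig k)^l) := by
  induction l with
  | zero =>
    refine ⟨by simp [CarryF], by simp [CarryF], by simp [CarryF]⟩
  | succ l ih =>
    obtain ⟨hpos, hdisj, hsum⟩ := ih
    -- injectivity of the child map on the product
    have hinj : ∀ p ∈ (CarryF k l) ×ˢ (Finset.range (k-1)),
        ∀ p' ∈ (CarryF k l) ×ˢ (Finset.range (k-1)),
        chld p.1 p.2 = chld p'.1 p'.2 → p = p' := by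
      rintro ⟨r, m⟩ hp ⟨r', m'⟩ hp' heq
      rw [Finset.mem_product] at hp hp'
      have hr := hpos r hp.1
      have hr' := hpos r' hp'.1
      by_cases hrr : r = r'
      · subst hrr
        have : m = m' := chld_inj_len hr (by rw [heq])
        simp [this]
      · exfalso
        have hne : (ivl (chld r m)).Nonempty := by
          rw [ivl, Set.nonempty_Ico]
          have := chld_len_pos hr m
          linarith
        have hd := hdisj (Finset.mem_coe.mpr hp.1) (Finset.mem_coe.mpr hp'.1) hrr
        have h1 : ivl (chld r m) ⊆ ivl r := chld_subset hr m
        have h2 : ivl (chld r m) ⊆ ivl r' := by rw [heq]; exact chld_subset hr' m'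
        exact Set.not_nonempty_empty (disjoint_self.mp (hd.mono h1 h2) ▸ hne)
    refine ⟨?_, ?_, ?_⟩
    · intro r hr
      simp only [CarryF, Finset.mem_image, Finset.mem_product] at hr
      obtain ⟨⟨r', m⟩, ⟨hr', hm⟩, rfl⟩ := hr
      exact chld_len_pos (hpos r' hr') m
    · intro c hc c' hc' hne
      simp only [CarryF, Finset.coe_image, Set.mem_image, Finset.mem_coe,
        Finset.mem_product] at hc hc'
      obtain ⟨⟨r, m⟩, ⟨hr, hm⟩, rfl⟩ := hc
      obtain ⟨⟨r', m'⟩, ⟨hr', hm'⟩, rfl⟩ := hc'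
      by_cases hrr : r = r'
      · subst hrr
        have hmm : m ≠ m' := fun h => hne (by rw [h])
        rcases Nat.lt_or_ge m m' with hlt | hge
        · exact chld_disjoint (hpos r hr) hlt
        · exact (chld_disjoint (hpos r hr) (by omega : m' < m)).symm
      · exact (hdisj (Finset.mem_coe.mpr hr) (Finset.mem_coe.mpr hr') hrr).mono
          (chld_subset (hpos r hr) m) (chld_subset (hpos r' hr') m')
    · rw [CarryF, Finset.sum_image hinj, Finset.sum_product]
      have : ∀ r ∈ CarryF k l, ∑ m ∈ Finset.range (k-1), (chld r m).2 = sig k * r.2 := by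
        intro r _
        simp only [chld]
        rw [← Finset.sum_mul, sum_sig k hk]
      calc ∑ r ∈ CarryF k l, ∑ m ∈ Finset.range (k-1), (chld r m).2
          = ∑ r ∈ CarryF k l, sig k * r.2 := Finset.sum_congr rfl this
        _ = sig k * ∑ r ∈ CarryF k l, r.2 := by rw [Finset.mul_sum]
        _ = sig k ^ (l+1) := by rw [hsum]; ring

/-- `|A_l| = ((1/2)(1 − 3^{−(k−1)}))^l · 3^{−k}` for `l = 0,…,n−1`, `n = 3^{k−1}`. -/
theorem tailSet_volume (k : ℕ) (hk : 2 ≤ k) (l : ℕ) (hl : l ≤ 3^(k-1) - 1) :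
    volume (TailSet k l) =
      ENNReal.ofReal ((((1:ℝ)/2) * (1 - (3:ℝ)^(1-(k:ℤ))))^l * (3:ℝ)^(-(k:ℤ))) := by
  have hk1 : 1 ≤ k := by omega
  obtain ⟨hpos, hdisj, hsum⟩ := carry_prop k hk1 l
  have hT : TailSet k l
      = ⋃ r ∈ CarryF k l, Set.Ico (r.1 + r.2 - (3:ℝ)^(-(k:ℤ))*r.2) (r.1 + r.2) := by
    rw [TailSet, ← coe_CarryF, Finset.set_biUnion_coe]
  have hsub : ∀ r ∈ CarryF k l,
      Set.Ico (r.1 + r.2 - (3:ℝ)^(-(k:ℤ))*r.2) (r.1 + r.2) ⊆ ivl r := by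
    intro r hr
    have h0 := zpow3_pos k
    have h1 := zpow3_le_one k
    have hr2 := hpos r hr
    exact Set.Ico_subset_Ico (by nlinarith) le_rfl
  rw [hT, measure_biUnion_finset]
  · have hvol : ∀ r ∈ CarryF k l,
        volume (Set.Ico (r.1 + r.2 - (3:ℝ)^(-(k:ℤ))*r.2) (r.1 + r.2))
          = ENNReal.ofReal ((3:ℝ)^(-(k:ℤ)) * r.2) := by
      intro r _
      rw [Real.volume_Ico]
      congr 1
      ring
    rw [Finset.sum_congr rfl hvol, ← ENNReal.ofReal_sum_of_nonneg]
    · congr 1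
      rw [← Finset.mul_sum, hsum, sig]
      ring
    · intro r hr
      have := hpos r hr
      have := zpow3_pos k
      positivity
  · intro c hc c' hc' hne
    exact (hdisj hc hc' hne).mono (hsub c hc) (hsub c' hc')
  · intro r _
    exact measurableSet_Ico
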